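/- A contest success function on N satisfies strict monotonicity (SM), Luce's choice axiom (LCA), and homogeneity (HOM) if and only if there exist parameters r > 0 and a_j > 0 for each j ∈ N such that for every subset M ⊆ N with |M| ≥ 2, every i ∈ M, and every effort vector x^M ∈ ℝ_+^M \ {0}: p_i^M(x^M) = a_i x_i^r / Σ_{j∈M} a_j x_j^r. -/

import Mathlib

open Finset

/-- A joint effort vector: componentwise nonnegative, and active on `M`. -/
def FeasibleOn {N : Type*} (M : Finset N) (x : N → ℝ) : Prop :=
  (∀ i, 0 ≤ x i) ∧ ∃ i ∈ M, x i ≠ 0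

/-- A feasible effort vector for the full contest: `x ∈ ℝ₊^N \ {0}`. -/
def Feasible {N : Type*} (x : N → ℝ) : Prop :=
  (∀ i, 0 ≤ x i) ∧ ∃ i, x i ≠ 0

/-- A contest success function (CSF) on contestant set `N`: for every `M ⊆ N` with
`|M| ≥ 2`, a family of functions `p M · i` for `i ∈ M`, valued in `[0,1]`, depending
only on the coordinates in `M`, and summing to one over `M`. -/
structure CSF (N : Type*) where
  p : Finset N → (N → ℝ) → N → ℝ
  restrict : ∀ M : Finset N, 2 ≤ M.card → ∀ x y : N → ℝ, FeasibleOn M x →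
    (∀ i ∈ M, x i = y i) → ∀ i ∈ M, p M x i = p M y i
  nonneg : ∀ M : Finset N, 2 ≤ M.card → ∀ x, FeasibleOn M x → ∀ i ∈ M, 0 ≤ p M x i
  le_one : ∀ M : Finset N, 2 ≤ M.card → ∀ x, FeasibleOn M x → ∀ i ∈ M, p M x i ≤ 1
  sum_eq_one : ∀ M : Finset N, 2 ≤ M.card → ∀ x, FeasibleOn M x → ∑ i ∈ M, p M x i = 1

namespace CSF

variable {N : Type*} [Fintype N] [DecidableEq N]

/-- Winning probability in the full contest. -/
def P (c : CSF N) (x : N → ℝ) (i : N) : ℝ := c.p Finset.univ x i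

/-- Strict monotonicity (SM). -/
def SM (c : CSF N) : Prop :=
  ∀ x, Feasible x → ∀ i : N, c.P x i < 1 → ∀ xi' : ℝ, x i < xi' →
    c.P x i < c.P (Function.update x i xi') i

/-- Luce's choice axiom (LCA). -/
def LCA (c : CSF N) : Prop :=
  ∀ x, Feasible x → ∀ M : Finset N, 2 ≤ M.card → (∃ i ∈ M, x i ≠ 0) →
    ∀ i ∈ M, c.P x i = c.p M x i * ∑ j ∈ M, c.P x j

/-- Deviation `d_{ij}(x)`: the externality of `i`'s activity on `j`'s allocation. -/
noncomputable def dev (c : CSF N) (x : N → ℝ) (i j : N) : ℝ :=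
  (c.P (Function.update x i 0) j - c.P x j) / c.P (Function.update x i 0) j

/-- Homogeneous relative externality (HRE). -/
def HRE (c : CSF N) : Prop :=
  ∀ x, Feasible x → ∀ i j : N, i ≠ j → 0 < x i → 0 < x j → ∀ l : ℝ, 0 < l →
    0 < c.P (Function.update x i 0) j → 0 < c.P (Function.update x j 0) i →
    0 < c.P (Function.update (fun k => l * x k) i 0) j →
    0 < c.P (Function.update (fun k => l * x k) j 0) i →
    c.dev x j i ≠ 0 → c.dev (fun k => l * x k) j i ≠ 0 →
    c.dev x i j / c.dev x j i
      = c.dev (fun k => l * x k) i j / c.dev (fun k => l * x k) j i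

/-- Relative homogeneity (RH). -/
def RH (c : CSF N) : Prop :=
  ∀ x, Feasible x → ∀ i j : N, 0 < x i → 0 < x j → ∀ l : ℝ, 0 < l →
    c.P x i / c.P x j = c.P (fun k => l * x k) i / c.P (fun k => l * x k) j

/-- Homogeneity (HOM). -/
def HOM (c : CSF N) : Prop :=
  ∀ x, Feasible x → ∀ i : N, ∀ l : ℝ, 0 < l → c.P (fun k => l * x k) i = c.P x i

/-- Anonymity (ANY). -/
def ANY (c : CSF N) : Prop :=
  ∀ π : Equiv.Perm N, ∀ x, Feasible x → ∀ i : N,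
    c.P (fun k => x (π.symm k)) (π i) = c.P x i

/-- No advantageous reallocation (NAR). -/
def NAR (c : CSF N) : Prop :=
  ∀ x, Feasible x → ∀ i j : N, i ≠ j → ∀ xi' xj' : ℝ, 0 ≤ xi' → 0 ≤ xj' →
    xi' + xj' = x i + x j → ∀ k : N, k ≠ i → k ≠ j →
    c.P (Function.update (Function.update x i xi') j xj') k = c.P x k

/-- Dummy consistency (DC). -/
def DC (c : CSF N) : Prop :=
  ∀ x, Feasible x → ∀ i : N, x i = 0 → ∀ j : N, j ≠ i →
    c.P x j = c.p (Finset.univ.erase i) x j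

/-- Clark–Riis independence (CRI). -/
def CRI (c : CSF N) : Prop :=
  ∀ x, Feasible x → ∀ i j : N, i ≠ j → c.P x j < 1 →
    c.P (Function.update x j 0) i = c.P x i / (1 - c.P x j)

/-- Split-proofness (SP). -/
def SP (c : CSF N) : Prop :=
  ∀ x, Feasible x → ∀ i j : N, i ≠ j →
    c.P x i + c.P x j ≤ c.p (Finset.univ.erase j) (Function.update x i (x i + x j)) i

/-- Collusion-proofness (CP). -/
def CP (c : CSF N) : Prop :=
  ∀ x, Feasible x → ∀ i j : N, i ≠ j →
    c.p (Finset.univ.erase j) (Function.update x i (x i + x j)) i ≤ c.P x i + c.P x j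

end CSF

set_option linter.unusedSectionVars false
set_option linter.unusedVariables false

lemma cauchy_linear (F : ℝ → ℝ) (hadd : ∀ a b, F (a + b) = F a + F b)
    (hmono : Monotone F) (z : ℝ) : F z = F 1 * z := by
  have hq : ∀ (q : ℚ) (x : ℝ), F ((q : ℝ) * x) = (q : ℝ) * F x := by
    intro q x
    have := map_ratCast_smul (AddMonoidHom.mk' F hadd) ℝ ℝ q x
    simpa using this
  have h0 : F 0 = 0 := by have := hadd 0 0; simp at this; linarith
  have hF1 : 0 ≤ F 1 := by have := hmono (zero_le_one (α := ℝ)); rwa [h0] at this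
  have hub : ∀ q : ℚ, z ≤ (q : ℝ) → F z ≤ (q : ℝ) * F 1 := by
    intro q hqz
    have h1 := hmono hqz
    have e : F (q : ℝ) = (q : ℝ) * F 1 := by
      have := hq q 1; rwa [mul_one] at this
    linarith
  have hlb : ∀ q : ℚ, (q : ℝ) ≤ z → (q : ℝ) * F 1 ≤ F z := by
    intro q hqz
    have h1 := hmono hqz
    have e : F (q : ℝ) = (q : ℝ) * F 1 := by
      have := hq q 1; rwa [mul_one] at this
    linarith
  apply le_antisymm
  · by_contra hlt
    push_neg at hlt
    rcases eq_or_lt_of_le hF1 with h | h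
    · obtain ⟨q, hq1⟩ := exists_rat_gt z
      have h2 := hub q hq1.le
      rw [← h] at h2 hlt
      simp at h2 hlt
      linarith
    · obtain ⟨q, hq1, hq2⟩ := exists_rat_btwn
        (show z < z + (F z - F 1 * z) / F 1 by
          have : 0 < (F z - F 1 * z) / F 1 := div_pos (by linarith) h
          linarith)
      have h3 := hub q hq1.le
      have h4 : (q : ℝ) * F 1 < (z + (F z - F 1 * z) / F 1) * F 1 :=
        mul_lt_mul_of_pos_right hq2 h
      rw [add_mul, div_mul_cancel₀ _ h.ne'] at h4
      linarith
  · by_contra hlt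
    push_neg at hlt
    rcases eq_or_lt_of_le hF1 with h | h
    · obtain ⟨q, hq1⟩ := exists_rat_lt z
      have h2 := hlb q hq1.le
      rw [← h] at h2 hlt
      simp at h2 hlt
      linarith
    · obtain ⟨q, hq1, hq2⟩ := exists_rat_btwn
        (show z - (F 1 * z - F z) / F 1 < z by
          have : 0 < (F 1 * z - F z) / F 1 := div_pos (by linarith) h
          linarith)
      have h3 := hlb q hq2.le
      have h4 : (z - (F 1 * z - F z) / F 1) * F 1 < (q : ℝ) * F 1 :=
        mul_lt_mul_of_pos_right hq1 h
      rw [sub_mul, div_mul_cancel₀ _ h.ne'] at h4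
      linarith

section Aux
open Finset Function

variable {N : Type*} [Fintype N] [DecidableEq N]

/-- strictly positive effort vectors -/
def SPos (x : N → ℝ) : Prop := ∀ i, 0 < x i

lemma SPos.feasible (hN : 3 ≤ Fintype.card N) {x : N → ℝ} (hx : SPos x) : Feasible x := by
  have hne : Nonempty N := Fintype.card_pos_iff.mp (by omega)
  obtain ⟨i⟩ := hne
  exact ⟨fun m => (hx m).le, ⟨i, (hx i).ne'⟩⟩

lemma card_univ_ge (hN : 3 ≤ Fintype.card N) : 2 ≤ (univ : Finset N).card := by
  rw [Finset.card_univ]; omega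

lemma feasibleOn_univ {x : N → ℝ} (hx : Feasible x) : FeasibleOn (univ : Finset N) x :=
  ⟨hx.1, hx.2.imp fun i h => ⟨mem_univ i, h⟩⟩

lemma exists_third (hN : 3 ≤ Fintype.card N) (i j : N) : ∃ k : N, k ≠ i ∧ k ≠ j := by
  by_contra h
  push_neg at h
  have hsub : (univ : Finset N) ⊆ {i, j} := by
    intro k _
    rcases eq_or_ne k i with rfl | hk
    · simp
    · simp [h k hk]
  have h1 := Finset.card_le_card hsub
  have h2 := Finset.card_insert_le i ({j} : Finset N)
  rw [Finset.card_univ] at h1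
  simp at h2
  omega

namespace CSF

variable (c : CSF N)

lemma sumP (hN : 3 ≤ Fintype.card N) {x : N → ℝ} (hx : Feasible x) :
    ∑ i, c.P x i = 1 := c.sum_eq_one univ (card_univ_ge hN) x (feasibleOn_univ hx)

lemma P_nonneg (hN : 3 ≤ Fintype.card N) {x : N → ℝ} (hx : Feasible x) (i : N) :
    0 ≤ c.P x i := c.nonneg univ (card_univ_ge hN) x (feasibleOn_univ hx) i (mem_univ i)

lemma P_le_one (hN : 3 ≤ Fintype.card N) {x : N → ℝ} (hx : Feasible x) (i : N) :
    c.P x i ≤ 1 := c.le_one univ (card_univ_ge hN) x (feasibleOn_univ hx) i (mem_univ i)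

lemma P_eq_zero_of_ne (hN : 3 ≤ Fintype.card N) {x : N → ℝ} (hx : Feasible x) {i j : N}
    (hij : i ≠ j) (h1 : c.P x i = 1) : c.P x j = 0 := by
  have hsum := c.sumP hN hx
  have h2 := Finset.add_sum_erase univ (c.P x) (mem_univ i)
  have h3 : c.P x j ≤ ∑ m ∈ univ.erase i, c.P x m :=
    Finset.single_le_sum (fun m _ => c.P_nonneg hN hx m)
      (Finset.mem_erase.mpr ⟨Ne.symm hij, mem_univ j⟩)
  have h4 := c.P_nonneg hN hx j
  linarith

lemma sum_two_le (hN : 3 ≤ Fintype.card N) {x : N → ℝ} (hx : Feasible x) {i j : N}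
    (hij : i ≠ j) : c.P x i + c.P x j ≤ 1 := by
  have h1 := Finset.add_sum_erase univ (c.P x) (mem_univ i)
  have h2 : c.P x j ≤ ∑ m ∈ univ.erase i, c.P x m :=
    Finset.single_le_sum (fun m _ => c.P_nonneg hN hx m)
      (Finset.mem_erase.mpr ⟨Ne.symm hij, mem_univ j⟩)
  rw [c.sumP hN hx] at h1
  linarith

lemma lemZ (hN : 3 ≤ Fintype.card N) (hSM : c.SM) {x : N → ℝ} {i : N} (hx : Feasible x)
    (h0 : c.P x i = 0) {s : ℝ} (hsi : s < x i) (hfs : Feasible (Function.update x i s)) :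
    c.P (Function.update x i s) i = 1 := by
  by_contra h
  have hlt : c.P (Function.update x i s) i < 1 :=
    lt_of_le_of_ne (c.P_le_one hN hfs i) h
  have hstep := hSM _ hfs i hlt (x i) (by simpa using hsi)
  rw [Function.update_idem, Function.update_eq_self] at hstep
  have hnn := c.P_nonneg hN hfs i
  linarith

lemma chain (hN : 3 ≤ Fintype.card N) (hSM : c.SM) {x : N → ℝ} (hx : SPos x) :
    ∀ S : Finset N, ∀ i m : N, i ∉ S → m ∉ S → (S.Nonempty ∨ m ≠ i) →
      c.P (fun k => if k ∈ S then 2 * x k else x k) m = 1 →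
      ∃ m', m' ≠ i ∧ c.P x m' = 1 := by
  intro S
  induction S using Finset.strongInduction with
  | _ S ih =>
    intro i m hiS hmS hdisj h1
    rcases S.eq_empty_or_nonempty with rfl | hSne
    · refine ⟨m, ?_, by simpa using h1⟩
      rcases hdisj with h | h
      · exact absurd h (by simp)
      · exact h
    · obtain ⟨m', hm'⟩ := hSne
      have hm'm : m' ≠ m := fun h => hmS (h ▸ hm')
      have hm'i : m' ≠ i := fun h => hiS (h ▸ hm')
      have hyPos : SPos (fun k => if k ∈ S then 2 * x k else x k) := fun k => by
        dsimp only; split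
        · linarith [hx k]
        · exact hx k
      have h0 : c.P (fun k => if k ∈ S then 2 * x k else x k) m' = 0 :=
        c.P_eq_zero_of_ne hN (hyPos.feasible hN) hm'm.symm h1
      have hupd : Function.update (fun k => if k ∈ S then 2 * x k else x k) m' (x m') =
          fun k => if k ∈ S.erase m' then 2 * x k else x k := by
        funext k
        rcases eq_or_ne k m' with rfl | hk
        · simp
        · simp [Function.update_of_ne hk, Finset.mem_erase, hk]
      have hePos : SPos (fun k => if k ∈ S.erase m' then 2 * x k else x k) := fun k => by
        dsimp only; split
        · linarith [hx k]
        · exact hx k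
      have h1' : c.P (fun k => if k ∈ S.erase m' then 2 * x k else x k) m' = 1 := by
        rw [← hupd]
        refine c.lemZ hN hSM (hyPos.feasible hN) h0 ?_ ?_
        · show x m' < if m' ∈ S then 2 * x m' else x m'
          rw [if_pos hm']; linarith [hx m']
        · rw [hupd]; exact hePos.feasible hN
      exact ih (S.erase m') (Finset.erase_ssubset hm') i m'
        (fun h => hiS (Finset.mem_of_mem_erase h)) (Finset.notMem_erase m' S)
        (Or.inr hm'i) h1'

lemma no_one (hN : 3 ≤ Fintype.card N) (hSM : c.SM) (hHOM : c.HOM) {x : N → ℝ}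
    (hx : SPos x) (i : N) : c.P x i ≠ 1 := by
  intro h1
  have hnt : Nontrivial N := Fintype.one_lt_card_iff_nontrivial.mp (by omega)
  obtain ⟨j, hj⟩ := exists_ne i
  have hPj : c.P x j = 0 := c.P_eq_zero_of_ne hN (hx.feasible hN) (Ne.symm hj) h1
  have h2x : SPos (fun m => 2 * x m) := fun m => by have := hx m; dsimp only; linarith
  have hP2 : c.P (fun m => 2 * x m) j = 0 := by
    rw [hHOM x (hx.feasible hN) j 2 (by norm_num)]; exact hPj
  have hupd1 : Function.update (fun m => 2 * x m) j (x j) =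
      fun k => if k ∈ univ.erase j then 2 * x k else x k := by
    funext k
    rcases eq_or_ne k j with rfl | hk
    · simp
    · simp [Function.update_of_ne hk, Finset.mem_erase, hk]
  have hwPos : SPos (fun k => if k ∈ univ.erase j then 2 * x k else x k) := fun k => by
    dsimp only; split
    · linarith [hx k]
    · exact hx k
  have hw : c.P (fun k => if k ∈ univ.erase j then 2 * x k else x k) j = 1 := by
    rw [← hupd1]
    refine c.lemZ hN hSM (h2x.feasible hN) hP2 ?_ ?_
    · show x j < 2 * x j; linarith [hx j]
    · rw [hupd1]; exact hwPos.feasible hN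
  have hwi0 : c.P (fun k => if k ∈ univ.erase j then 2 * x k else x k) i = 0 :=
    c.P_eq_zero_of_ne hN (hwPos.feasible hN) hj hw
  have hiej : i ∈ univ.erase j := Finset.mem_erase.mpr ⟨Ne.symm hj, mem_univ i⟩
  have hvPos : SPos (fun k => if k ∈ (univ.erase j).erase i then 2 * x k else x k) := fun k => by
    dsimp only; split
    · linarith [hx k]
    · exact hx k
  have hupd2 : Function.update (fun k => if k ∈ univ.erase j then 2 * x k else x k) i (x i) =
      fun k => if k ∈ (univ.erase j).erase i then 2 * x k else x k := by
    funext k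
    rcases eq_or_ne k i with rfl | hk
    · simp
    · simp [Function.update_of_ne hk, Finset.mem_erase, hk]
  have hv : c.P (fun k => if k ∈ (univ.erase j).erase i then 2 * x k else x k) i = 1 := by
    rw [← hupd2]
    refine c.lemZ hN hSM (hwPos.feasible hN) hwi0 ?_ ?_
    · show x i < if i ∈ univ.erase j then 2 * x i else x i
      rw [if_pos hiej]; linarith [hx i]
    · rw [hupd2]; exact hvPos.feasible hN
  have hScard : ((univ.erase j).erase i).Nonempty := by
    rw [← Finset.card_pos, Finset.card_erase_of_mem hiej,
      Finset.card_erase_of_mem (mem_univ j), Finset.card_univ]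
    omega
  obtain ⟨m', hm'i, hm'1⟩ := c.chain hN hSM hx ((univ.erase j).erase i) i i
    (Finset.notMem_erase i _) (Finset.notMem_erase i _) (Or.inl hScard) hv
  have hz := c.P_eq_zero_of_ne hN (hx.feasible hN) (Ne.symm hm'i) h1
  rw [hm'1] at hz
  norm_num at hz

lemma P_lt_one (hN : 3 ≤ Fintype.card N) (hSM : c.SM) (hHOM : c.HOM) {x : N → ℝ}
    (hx : SPos x) (i : N) : c.P x i < 1 :=
  lt_of_le_of_ne (c.P_le_one hN (hx.feasible hN) i) (c.no_one hN hSM hHOM hx i)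

lemma P_pos (hN : 3 ≤ Fintype.card N) (hSM : c.SM) (hHOM : c.HOM) {x : N → ℝ}
    (hx : SPos x) (i : N) : 0 < c.P x i := by
  rcases (c.P_nonneg hN (hx.feasible hN) i).lt_or_eq with h | h
  · exact h
  · exfalso
    have hyPos : SPos (Function.update x i (x i / 2)) := fun m => by
      rcases eq_or_ne m i with rfl | hm
      · simpa using half_pos (hx m)
      · simpa [Function.update_of_ne hm] using hx m
    have h1 := c.lemZ hN hSM (hx.feasible hN) h.symm
      (show x i / 2 < x i by linarith [hx i]) (hyPos.feasible hN)
    exact c.no_one hN hSM hHOM hyPos i h1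

end CSF
end Aux

section Aux2
open Finset Function

variable {N : Type*} [Fintype N] [DecidableEq N]

namespace CSF

variable (c : CSF N)

lemma pair_card {i j : N} (h : i ≠ j) : ({i, j} : Finset N).card = 2 := by
  rw [Finset.card_insert_of_notMem (by simpa using h), Finset.card_singleton]

lemma feasibleOn_pair {i j : N} {x : N → ℝ} (hnn : ∀ m, 0 ≤ x m)
    (h : x i ≠ 0 ∨ x j ≠ 0) : FeasibleOn ({i, j} : Finset N) x :=
  ⟨hnn, h.elim (fun h => ⟨i, by simp, h⟩) (fun h => ⟨j, by simp, h⟩)⟩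

lemma LCA2 (hLCA : c.LCA) {x : N → ℝ} (hx : Feasible x) {i j : N} (hij : i ≠ j)
    (hnz : x i ≠ 0 ∨ x j ≠ 0) :
    c.P x i = c.p {i, j} x i * (c.P x i + c.P x j) ∧
    c.P x j = c.p {i, j} x j * (c.P x i + c.P x j) := by
  have hcard : 2 ≤ ({i, j} : Finset N).card := (pair_card hij).ge
  have hex : ∃ m ∈ ({i, j} : Finset N), x m ≠ 0 :=
    hnz.elim (fun h => ⟨i, by simp, h⟩) (fun h => ⟨j, by simp, h⟩)
  constructor
  · have := hLCA x hx {i, j} hcard hex i (by simp)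
    rwa [Finset.sum_pair hij] at this
  · have := hLCA x hx {i, j} hcard hex j (by simp)
    rwa [Finset.sum_pair hij] at this

lemma cross (hN : 3 ≤ Fintype.card N) (hLCA : c.LCA) {x y : N → ℝ} (hx : SPos x)
    (hy : SPos y) {i j : N} (hij : i ≠ j) (hxi : x i = y i) (hxj : x j = y j) :
    c.P x i * c.P y j = c.P y i * c.P x j := by
  obtain ⟨e1, e2⟩ := c.LCA2 hLCA (hx.feasible hN) hij (Or.inl (hx i).ne')
  obtain ⟨e3, e4⟩ := c.LCA2 hLCA (hy.feasible hN) hij (Or.inl (hy i).ne')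
  have hagree : ∀ m ∈ ({i, j} : Finset N), x m = y m := by
    intro m hm
    rcases Finset.mem_insert.mp hm with rfl | hm
    · exact hxi
    · rw [Finset.mem_singleton.mp hm]; exact hxj
  have hfo : FeasibleOn ({i, j} : Finset N) x :=
    feasibleOn_pair (fun m => (hx m).le) (Or.inl (hx i).ne')
  have hres_i : c.p {i, j} x i = c.p {i, j} y i :=
    c.restrict {i, j} (pair_card hij).ge x y hfo hagree i (by simp)
  have hres_j : c.p {i, j} x j = c.p {i, j} y j :=
    c.restrict {i, j} (pair_card hij).ge x y hfo hagree j (by simp)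
  set Sx := c.P x i + c.P x j with hSx
  set Sy := c.P y i + c.P y j with hSy
  rw [e1, e2, e3, e4, hres_i, hres_j]
  ring

end CSF

/-- canonical two-coordinate vector -/
def bvec (i j : N) (s u : ℝ) : N → ℝ := fun m => if m = i then s else if m = j then u else 1

lemma bvec_pos {i j : N} {s u : ℝ} (hs : 0 < s) (hu : 0 < u) : SPos (bvec i j s u) := by
  intro m
  unfold bvec
  split_ifs
  exacts [hs, hu, one_pos]

@[simp] lemma bvec_apply_i {i j : N} (s u : ℝ) : bvec i j s u i = s := by simp [bvec]

lemma bvec_apply_j {i j : N} (hij : i ≠ j) (s u : ℝ) : bvec i j s u j = u := by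
  simp [bvec, Ne.symm hij]

lemma bvec_swap {i j : N} (hij : i ≠ j) (s u : ℝ) : bvec j i u s = bvec i j s u := by
  funext m
  rcases eq_or_ne m i with rfl | hmi
  · simp [bvec, hij, Ne.symm hij]
  · rcases eq_or_ne m j with rfl | hmj
    · simp [bvec, hij, Ne.symm hij]
    · simp [bvec, hmi, hmj]

namespace CSF

variable (c : CSF N)

/-- pairwise winning ratio -/
noncomputable def rho (i j : N) (s u : ℝ) : ℝ :=
  c.P (bvec i j s u) i / c.P (bvec i j s u) j

lemma rho_pos (hN : 3 ≤ Fintype.card N) (hSM : c.SM) (hHOM : c.HOM) {i j : N} {s u : ℝ}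
    (hs : 0 < s) (hu : 0 < u) : 0 < c.rho i j s u :=
  div_pos (c.P_pos hN hSM hHOM (bvec_pos hs hu) i) (c.P_pos hN hSM hHOM (bvec_pos hs hu) j)

lemma ratio_eq (hN : 3 ≤ Fintype.card N) (hSM : c.SM) (hHOM : c.HOM) (hLCA : c.LCA)
    {x : N → ℝ} (hx : SPos x) {i j : N} (hij : i ≠ j) :
    c.P x i / c.P x j = c.rho i j (x i) (x j) := by
  have hB : SPos (bvec i j (x i) (x j)) := bvec_pos (hx i) (hx j)
  have hc := c.cross hN hLCA hx hB hij (by simp) (bvec_apply_j hij _ _).symm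
  rw [rho, div_eq_div_iff (c.P_pos hN hSM hHOM hx j).ne' (c.P_pos hN hSM hHOM hB j).ne']
  exact hc

lemma rho_inv {i j : N} (hij : i ≠ j) (s u : ℝ) : c.rho j i u s = (c.rho i j s u)⁻¹ := by
  rw [rho, rho, bvec_swap hij, inv_div]

lemma rho_mul (hN : 3 ≤ Fintype.card N) (hSM : c.SM) (hHOM : c.HOM) (hLCA : c.LCA)
    {i j k : N} (hij : i ≠ j) (hik : i ≠ k) (hjk : j ≠ k) {s u v : ℝ}
    (hs : 0 < s) (hu : 0 < u) (hv : 0 < v) :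
    c.rho i j s u = c.rho i k s v * c.rho k j v u := by
  set C : N → ℝ := fun m => if m = i then s else if m = j then u else if m = k then v else 1
    with hCdef
  have hCpos : SPos C := by
    intro m; simp only [hCdef]; split_ifs; exacts [hs, hu, hv, one_pos]
  have hCi : C i = s := by simp [hCdef]
  have hCj : C j = u := by simp [hCdef, Ne.symm hij]
  have hCk : C k = v := by simp [hCdef, Ne.symm hik, Ne.symm hjk]
  have e1 := c.ratio_eq hN hSM hHOM hLCA hCpos hij
  have e2 := c.ratio_eq hN hSM hHOM hLCA hCpos hik
  have e3 := c.ratio_eq hN hSM hHOM hLCA hCpos (Ne.symm hjk)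
  rw [hCi, hCj] at e1
  rw [hCi, hCk] at e2
  rw [hCk, hCj] at e3
  rw [← e1, ← e2, ← e3]
  have p1 := c.P_pos hN hSM hHOM hCpos i
  have p2 := c.P_pos hN hSM hHOM hCpos j
  have p3 := c.P_pos hN hSM hHOM hCpos k
  field_simp

lemma rho_hom (hN : 3 ≤ Fintype.card N) (hSM : c.SM) (hHOM : c.HOM) (hLCA : c.LCA)
    {i j : N} (hij : i ≠ j) {s u l : ℝ} (hs : 0 < s) (hu : 0 < u) (hl : 0 < l) :
    c.rho i j (l * s) (l * u) = c.rho i j s u := by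
  have hB : SPos (bvec i j s u) := bvec_pos hs hu
  have hy : SPos (fun m => l * bvec i j s u m) := fun m => mul_pos hl (hB m)
  have e := c.ratio_eq hN hSM hHOM hLCA hy hij
  simp only [bvec_apply_i, bvec_apply_j hij] at e
  rw [← e]
  have h1 := hHOM (bvec i j s u) (hB.feasible hN) i l hl
  have h2 := hHOM (bvec i j s u) (hB.feasible hN) j l hl
  rw [rho, h1, h2]

lemma rho_strict (hN : 3 ≤ Fintype.card N) (hSM : c.SM) (hHOM : c.HOM) (hLCA : c.LCA)
    {i j : N} (hij : i ≠ j) {s s' u : ℝ} (hs : 0 < s) (hss' : s < s') (hu : 0 < u) :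
    c.rho i j s u < c.rho i j s' u := by
  obtain ⟨k, hki, hkj⟩ := exists_third hN i j
  have hB : SPos (bvec i j s u) := bvec_pos hs hu
  have hB' : SPos (bvec i j s' u) := bvec_pos (lt_trans hs hss') hu
  have hupd : bvec i j s' u = Function.update (bvec i j s u) i s' := by
    funext m
    rcases eq_or_ne m i with rfl | hm
    · simp
    · simp [Function.update_of_ne hm, bvec, hm]
  have h1 : c.P (bvec i j s u) i < c.P (bvec i j s' u) i := by
    have := hSM (bvec i j s u) (hB.feasible hN) i (c.P_lt_one hN hSM hHOM hB i) s'
      (by simpa using hss')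
    rwa [← hupd] at this
  have hinv : ∀ m, m ≠ i →
      c.P (bvec i j s' u) m * c.P (bvec i j s u) k
        = c.P (bvec i j s u) m * c.P (bvec i j s' u) k := by
    intro m hm
    rcases eq_or_ne m k with rfl | hmk
    · ring
    · exact c.cross hN hLCA hB' hB hmk
        (show bvec i j s' u m = bvec i j s u m by simp [bvec, hm])
        (show bvec i j s' u k = bvec i j s u k by simp [bvec, hki])
  have hs1 : ∑ m ∈ univ.erase i, c.P (bvec i j s u) m = 1 - c.P (bvec i j s u) i := by
    have := Finset.add_sum_erase univ (c.P (bvec i j s u)) (mem_univ i)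
    rw [c.sumP hN (hB.feasible hN)] at this
    linarith
  have hs2 : ∑ m ∈ univ.erase i, c.P (bvec i j s' u) m = 1 - c.P (bvec i j s' u) i := by
    have := Finset.add_sum_erase univ (c.P (bvec i j s' u)) (mem_univ i)
    rw [c.sumP hN (hB'.feasible hN)] at this
    linarith
  have hsum : (1 - c.P (bvec i j s' u) i) * c.P (bvec i j s u) k
      = (1 - c.P (bvec i j s u) i) * c.P (bvec i j s' u) k := by
    have hcong : ∑ m ∈ univ.erase i, c.P (bvec i j s' u) m * c.P (bvec i j s u) k
        = ∑ m ∈ univ.erase i, c.P (bvec i j s u) m * c.P (bvec i j s' u) k :=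
      Finset.sum_congr rfl fun m hm => hinv m (Finset.mem_erase.mp hm).1
    rw [← Finset.sum_mul, ← Finset.sum_mul, hs1, hs2] at hcong
    exact hcong
  have hpBk := c.P_pos hN hSM hHOM hB k
  have hpB'k := c.P_pos hN hSM hHOM hB' k
  have hpBj := c.P_pos hN hSM hHOM hB j
  have hpB'j := c.P_pos hN hSM hHOM hB' j
  have hpBi := c.P_pos hN hSM hHOM hB i
  have hlt1 := c.P_lt_one hN hSM hHOM hB i
  have h2 : (1 - c.P (bvec i j s' u) i) < (1 - c.P (bvec i j s u) i) := by linarith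
  have h3 : (1 - c.P (bvec i j s u) i) * c.P (bvec i j s' u) k
      < (1 - c.P (bvec i j s u) i) * c.P (bvec i j s u) k := by
    rw [← hsum]
    exact mul_lt_mul_of_pos_right h2 hpBk
  have hk' : c.P (bvec i j s' u) k < c.P (bvec i j s u) k :=
    lt_of_mul_lt_mul_left h3 (by linarith)
  have hj' : c.P (bvec i j s' u) j < c.P (bvec i j s u) j := by
    have h4 := hinv j (Ne.symm hij)
    have h5 : c.P (bvec i j s' u) j * c.P (bvec i j s u) k
        < c.P (bvec i j s u) j * c.P (bvec i j s u) k := by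
      rw [h4]
      exact mul_lt_mul_of_pos_left hk' hpBj
    exact lt_of_mul_lt_mul_right h5 hpBk.le
  have e := c.ratio_eq hN hSM hHOM hLCA hB hij
  have e' := c.ratio_eq hN hSM hHOM hLCA hB' hij
  rw [show (bvec i j s u) i = s from by simp, bvec_apply_j hij] at e
  rw [show (bvec i j s' u) i = s' from by simp, bvec_apply_j hij] at e'
  rw [← e, ← e', div_lt_div_iff₀ hpBj hpB'j]
  calc c.P (bvec i j s u) i * c.P (bvec i j s' u) j
      < c.P (bvec i j s u) i * c.P (bvec i j s u) j :=
        mul_lt_mul_of_pos_left hj' hpBi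
    _ < c.P (bvec i j s' u) i * c.P (bvec i j s u) j :=
        mul_lt_mul_of_pos_right h1 hpBj

lemma sep (hN : 3 ≤ Fintype.card N) (hSM : c.SM) (hHOM : c.HOM) (hLCA : c.LCA)
    {i j k : N} (hij : i ≠ j) (hik : i ≠ k) (hjk : j ≠ k) {s u l : ℝ}
    (hs : 0 < s) (hu : 0 < u) (hl : 0 < l) :
    c.rho i k (l * s) 1 * c.rho j k u 1 = c.rho i k s 1 * c.rho j k (l * u) 1 := by
  have e1 : c.rho i j (l * s) (l * u) = c.rho i j s u :=
    c.rho_hom hN hSM hHOM hLCA hij hs hu hl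
  have e2 : c.rho i j s u = c.rho i k s 1 * c.rho k j 1 u :=
    c.rho_mul hN hSM hHOM hLCA hij hik hjk hs hu one_pos
  have e3 : c.rho i j (l * s) (l * u) = c.rho i k (l * s) 1 * c.rho k j 1 (l * u) :=
    c.rho_mul hN hSM hHOM hLCA hij hik hjk (mul_pos hl hs) (mul_pos hl hu) one_pos
  have e4 : c.rho k j 1 u = (c.rho j k u 1)⁻¹ := c.rho_inv hjk u 1
  have e5 : c.rho k j 1 (l * u) = (c.rho j k (l * u) 1)⁻¹ := c.rho_inv hjk (l * u) 1
  have h1 : 0 < c.rho j k u 1 := c.rho_pos hN hSM hHOM hu one_pos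
  have h2 : 0 < c.rho j k (l * u) 1 := c.rho_pos hN hSM hHOM (mul_pos hl hu) one_pos
  have key : c.rho i k (l * s) 1 * (c.rho j k (l * u) 1)⁻¹
      = c.rho i k s 1 * (c.rho j k u 1)⁻¹ := by
    rw [← e5, ← e4, ← e3, e1, e2]
  rw [← div_eq_mul_inv, ← div_eq_mul_inv, div_eq_div_iff h2.ne' h1.ne'] at key
  exact key

end CSF
end Aux2

section Forward
open Finset Function

variable {N : Type*} [Fintype N] [DecidableEq N]

namespace CSF

variable (c : CSF N)

lemma forward (hN : 3 ≤ Fintype.card N) (hSM : c.SM) (hLCA : c.LCA) (hHOM : c.HOM) :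
    ∃ (r : ℝ) (a : N → ℝ), 0 < r ∧ (∀ j, 0 < a j) ∧
      ∀ M : Finset N, 2 ≤ M.card → ∀ x, FeasibleOn M x → ∀ i ∈ M,
        c.p M x i = a i * x i ^ r / ∑ j ∈ M, a j * x j ^ r := by
  classical
  obtain ⟨o1, o2, o3, h12, h13, h23⟩ := Fintype.two_lt_card_iff.mp (show 2 < Fintype.card N by omega)
  -- the common scaling function
  set h : ℝ → ℝ := fun l => c.rho o2 o3 l 1 / c.rho o2 o3 1 1 with hhdef
  have hG2 : 0 < c.rho o2 o3 1 1 := c.rho_pos hN hSM hHOM one_pos one_pos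
  have hpos_h : ∀ l, 0 < l → 0 < h l := fun l hl =>
    div_pos (c.rho_pos hN hSM hHOM hl one_pos) hG2
  have h_one : h 1 = 1 := div_self hG2.ne'
  have key1 : ∀ i, i ≠ o2 → i ≠ o3 → ∀ l s : ℝ, 0 < l → 0 < s →
      c.rho i o3 (l * s) 1 * c.rho o2 o3 1 1 = c.rho i o3 s 1 * c.rho o2 o3 l 1 := by
    intro i h2 h3 l s hl hs
    have := c.sep hN hSM hHOM hLCA h2 h3 h23 hs one_pos hl
    rwa [mul_one] at this
  have hgmul : ∀ i, i ≠ o3 → ∀ l s : ℝ, 0 < l → 0 < s →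
      c.rho i o3 (l * s) 1 = c.rho i o3 s 1 * h l := by
    intro i h3 l s hl hs
    have hval : h l = c.rho o2 o3 l 1 / c.rho o2 o3 1 1 := by rw [hhdef]
    rcases eq_or_ne i o2 with h2 | h2
    · -- i = o2 : route through o1
      rw [h2]
      have k2 := c.sep hN hSM hHOM hLCA (Ne.symm h12) h23 h13 hs one_pos hl
      rw [mul_one] at k2
      -- k2 : rho o2 o3 (l*s) 1 * rho o1 o3 1 1 = rho o2 o3 s 1 * rho o1 o3 l 1
      have k1 := key1 o1 h12 h13 l 1 hl one_pos
      rw [mul_one] at k1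
      -- k1 : rho o1 o3 l 1 * rho o2 o3 1 1 = rho o1 o3 1 1 * rho o2 o3 l 1
      have p1 : 0 < c.rho o1 o3 1 1 := c.rho_pos hN hSM hHOM one_pos one_pos
      have hBig : c.rho o2 o3 (l * s) 1 * c.rho o2 o3 1 1 * c.rho o1 o3 1 1
          = c.rho o2 o3 s 1 * c.rho o2 o3 l 1 * c.rho o1 o3 1 1 := by
        linear_combination c.rho o2 o3 1 1 * k2 + c.rho o2 o3 s 1 * k1
      have hred : c.rho o2 o3 (l * s) 1 * c.rho o2 o3 1 1
          = c.rho o2 o3 s 1 * c.rho o2 o3 l 1 :=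
        mul_right_cancel₀ p1.ne' hBig
      rw [hval, mul_div_assoc', eq_div_iff hG2.ne']
      linear_combination hred
    · have k := key1 i h2 h3 l s hl hs
      rw [hval, mul_div_assoc', eq_div_iff hG2.ne']
      linear_combination k
  have hmul : ∀ l μ : ℝ, 0 < l → 0 < μ → h (l * μ) = h l * h μ := by
    intro l μ hl hμ
    have e := hgmul o2 h23 l μ hl hμ
    have e2 := hgmul o2 h23 μ 1 hμ one_pos
    rw [mul_one] at e2
    have hval : ∀ t : ℝ, h t = c.rho o2 o3 t 1 / c.rho o2 o3 1 1 := fun t => by rw [hhdef]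
    rw [hval (l * μ), e, e2]
    field_simp [hval]
  have hmono : ∀ a b : ℝ, 0 < a → a < b → h a < h b := by
    intro a b ha hab
    have hlt : c.rho o2 o3 a 1 < c.rho o2 o3 b 1 :=
      c.rho_strict hN hSM hHOM hLCA h23 ha hab one_pos
    have hval : ∀ t : ℝ, h t = c.rho o2 o3 t 1 / c.rho o2 o3 1 1 := fun t => by rw [hhdef]
    rw [hval a, hval b]
    exact div_lt_div_of_pos_right hlt hG2
  -- Cauchy step
  set F : ℝ → ℝ := fun z => Real.log (h (Real.exp z)) with hFdef
  have hFval : ∀ z, F z = Real.log (h (Real.exp z)) := fun z => by rw [hFdef]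
  have hFadd : ∀ a b, F (a + b) = F a + F b := by
    intro a b
    rw [hFval, hFval, hFval, Real.exp_add,
      hmul _ _ (Real.exp_pos a) (Real.exp_pos b),
      Real.log_mul (hpos_h _ (Real.exp_pos a)).ne' (hpos_h _ (Real.exp_pos b)).ne']
  have hFsm : StrictMono F := by
    intro a b hab
    rw [hFval, hFval]
    exact Real.log_lt_log (hpos_h _ (Real.exp_pos a))
      (hmono _ _ (Real.exp_pos a) (Real.exp_lt_exp.mpr hab))
  have hcau : ∀ z, F z = F 1 * z := fun z => cauchy_linear F hFadd hFsm.monotone z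
  set r := F 1 with hrdef
  have hr : 0 < r := by
    have h1e : (1 : ℝ) < Real.exp 1 := by
      have := Real.add_one_le_exp 1; linarith
    have hh1 : 1 < h (Real.exp 1) := by
      have := hmono 1 (Real.exp 1) one_pos h1e
      rwa [h_one] at this
    rw [hrdef, hFval]
    exact Real.log_pos hh1
  have hhr : ∀ t : ℝ, 0 < t → h t = t ^ r := by
    intro t ht
    have e1 : F (Real.log t) = Real.log (h t) := by
      rw [hFval, Real.exp_log ht]
    have e2 : Real.log (h t) = r * Real.log t := by rw [← e1, hcau]
    rw [Real.rpow_def_of_pos ht, mul_comm, ← e2, Real.exp_log (hpos_h t ht)]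
  -- the coefficients
  set a : N → ℝ := fun i => if i = o3 then 1 else c.rho i o3 1 1 with hadef
  have hao3 : a o3 = 1 := by rw [hadef]; simp
  have haval : ∀ i, i ≠ o3 → a i = c.rho i o3 1 1 := by
    intro i h3; rw [hadef]; simp [h3]
  have hapos : ∀ i, 0 < a i := by
    intro i
    rcases eq_or_ne i o3 with rfl | h3
    · rw [hao3]; exact one_pos
    · rw [haval i h3]; exact c.rho_pos hN hSM hHOM one_pos one_pos
  have hgr : ∀ i, i ≠ o3 → ∀ t : ℝ, 0 < t → c.rho i o3 t 1 = a i * t ^ r := by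
    intro i h3 t ht
    have e := hgmul i h3 t 1 ht one_pos
    rw [mul_one] at e
    rw [e, hhr t ht, haval i h3]
  -- full rho formula
  have hrho_formula : ∀ i j : N, i ≠ j → ∀ s u : ℝ, 0 < s → 0 < u →
      c.rho i j s u = (a i * s ^ r) / (a j * u ^ r) := by
    intro i j hij s u hs hu
    have base : ∀ t : ℝ, 0 < t → c.rho i j t 1 = (a i * t ^ r) / a j := by
      intro t ht
      rcases eq_or_ne j o3 with rfl | hj3
      · rw [hgr i hij t ht, hao3, div_one]
      · rcases eq_or_ne i o3 with hi3 | hi3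
        · -- i = o3
          rw [hi3]
          have hij' : o3 ≠ j := by rw [← hi3]; exact hij
          have e1 : c.rho o3 j t 1 = (c.rho j o3 1 t)⁻¹ := c.rho_inv hj3 1 t
          have e2 : c.rho j o3 (t⁻¹ * 1) (t⁻¹ * t) = c.rho j o3 1 t :=
            c.rho_hom hN hSM hHOM hLCA hj3 one_pos ht (inv_pos.mpr ht)
          rw [mul_one, inv_mul_cancel₀ ht.ne'] at e2
          rw [e1, ← e2, hgr j hj3 t⁻¹ (inv_pos.mpr ht), Real.inv_rpow ht.le, hao3]
          rw [mul_inv, inv_inv, one_mul]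
          ring
        · have e := c.rho_mul hN hSM hHOM hLCA hij hi3 hj3 ht one_pos one_pos
          have e2 : c.rho o3 j 1 1 = (c.rho j o3 1 1)⁻¹ := c.rho_inv hj3 1 1
          rw [e, e2, hgr i hi3 t ht, ← haval j hj3, div_eq_mul_inv]
    have hhomred : c.rho i j (u⁻¹ * s) (u⁻¹ * u) = c.rho i j s u :=
      c.rho_hom hN hSM hHOM hLCA hij hs hu (inv_pos.mpr hu)
    rw [inv_mul_cancel₀ hu.ne'] at hhomred
    rw [← hhomred, base _ (mul_pos (inv_pos.mpr hu) hs),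
      Real.mul_rpow (inv_pos.mpr hu).le hs.le, Real.inv_rpow hu.le]
    have h1 : (0:ℝ) < u ^ r := Real.rpow_pos_of_pos hu r
    have h2 : (0:ℝ) < a j := hapos j
    rw [div_eq_div_iff h2.ne' (mul_pos h2 h1).ne']
    field_simp
  -- P formula on strictly positive vectors
  have hDpos : ∀ x : N → ℝ, Feasible x → 0 < ∑ j, a j * x j ^ r := by
    intro x hx
    obtain ⟨j, hj⟩ := hx.2
    exact Finset.sum_pos'
      (fun m _ => mul_nonneg (hapos m).le (Real.rpow_nonneg (hx.1 m) r))
      ⟨j, mem_univ j, mul_pos (hapos j)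
        (Real.rpow_pos_of_pos ((hx.1 j).lt_of_ne (Ne.symm hj)) r)⟩
  have hPpos_formula : ∀ x : N → ℝ, SPos x → ∀ i,
      c.P x i * (∑ j, a j * x j ^ r) = a i * x i ^ r := by
    intro x hx i
    have hc : ∀ j, c.P x i * (a j * x j ^ r) = c.P x j * (a i * x i ^ r) := by
      intro j
      rcases eq_or_ne i j with rfl | hij
      · ring
      · have e := c.ratio_eq hN hSM hHOM hLCA hx hij
        rw [hrho_formula i j hij _ _ (hx i) (hx j)] at e
        have h1 := c.P_pos hN hSM hHOM hx j
        have h2 : 0 < a j * x j ^ r :=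
          mul_pos (hapos j) (Real.rpow_pos_of_pos (hx j) r)
        rw [div_eq_div_iff h1.ne' h2.ne'] at e
        linear_combination e
    calc c.P x i * ∑ j, a j * x j ^ r = ∑ j, c.P x i * (a j * x j ^ r) := by
          rw [Finset.mul_sum]
      _ = ∑ j, c.P x j * (a i * x i ^ r) := Finset.sum_congr rfl fun j _ => hc j
      _ = (∑ j, c.P x j) * (a i * x i ^ r) := by rw [Finset.sum_mul]
      _ = a i * x i ^ r := by rw [c.sumP hN (hx.feasible hN), one_mul]
  have hPpos_div : ∀ x : N → ℝ, SPos x → ∀ i,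
      c.P x i = a i * x i ^ r / ∑ j, a j * x j ^ r := by
    intro x hx i
    rw [eq_div_iff (hDpos x (hx.feasible hN)).ne']
    exact hPpos_formula x hx i
  -- pair values for positive pairs inside arbitrary vectors
  have hpair : ∀ i j : N, i ≠ j → ∀ x : N → ℝ, (∀ m, 0 ≤ x m) → 0 < x i → 0 < x j →
      c.p {i, j} x i = a i * x i ^ r / (a i * x i ^ r + a j * x j ^ r) := by
    intro i j hij x hnn hxi hxj
    have hBpos : SPos (bvec i j (x i) (x j)) := bvec_pos hxi hxj
    have hBi : bvec i j (x i) (x j) i = x i := by simp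
    have hBj : bvec i j (x i) (x j) j = x j := bvec_apply_j hij _ _
    have hres : c.p {i, j} x i = c.p {i, j} (bvec i j (x i) (x j)) i :=
      c.restrict {i, j} (pair_card hij).ge x _ (feasibleOn_pair hnn (Or.inl hxi.ne'))
        (fun m hm => by
          rcases Finset.mem_insert.mp hm with rfl | hm
          · exact hBi.symm
          · rw [Finset.mem_singleton.mp hm]; exact hBj.symm) i (by simp)
    have hL := (c.LCA2 hLCA (hBpos.feasible hN) hij (Or.inl (hBpos i).ne')).1
    have hPi := c.P_pos hN hSM hHOM hBpos i
    have hPj := c.P_pos hN hSM hHOM hBpos j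
    have hS : 0 < c.P (bvec i j (x i) (x j)) i + c.P (bvec i j (x i) (x j)) j :=
      add_pos hPi hPj
    have hp : c.p {i, j} (bvec i j (x i) (x j)) i
        = c.P (bvec i j (x i) (x j)) i
          / (c.P (bvec i j (x i) (x j)) i + c.P (bvec i j (x i) (x j)) j) := by
      rw [eq_div_iff hS.ne']; linarith [hL]
    have hD := hDpos _ (hBpos.feasible hN)
    have h1 : 0 < a i * x i ^ r := mul_pos (hapos i) (Real.rpow_pos_of_pos hxi r)
    have h2 : 0 < a j * x j ^ r := mul_pos (hapos j) (Real.rpow_pos_of_pos hxj r)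
    rw [hres, hp, hPpos_div _ hBpos i, hPpos_div _ hBpos j, hBi, hBj]
    rw [← add_div]
    rw [div_div_div_cancel_right₀ (hDpos _ (hBpos.feasible hN)).ne']
  -- zero coordinates get zero probability
  have hPzero : ∀ x : N → ℝ, Feasible x → ∀ i, x i = 0 → c.P x i = 0 := by
    intro x hx i hxi
    by_contra hne
    have hip : 0 < c.P x i := (c.P_nonneg hN hx i).lt_of_ne (Ne.symm hne)
    obtain ⟨j, hj0⟩ := hx.2
    have hji : j ≠ i := fun h => hj0 (h ▸ hxi)
    have hxj : 0 < x j := (hx.1 j).lt_of_ne (Ne.symm hj0)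
    rcases (c.P_le_one hN hx i).lt_or_eq with hlt | heq1
    · -- interior case: small t trick
      set ci := c.P x i with hci
      set A := a j * x j ^ r with hA
      have hApos : 0 < A := mul_pos (hapos j) (Real.rpow_pos_of_pos hxj r)
      set eps := ci * A / (a i * (1 - ci)) with heps
      have hepos : 0 < eps :=
        div_pos (mul_pos hip hApos) (mul_pos (hapos i) (by linarith))
      set t := eps ^ r⁻¹ with ht
      have htpos : 0 < t := Real.rpow_pos_of_pos hepos _
      have htr : t ^ r = eps := by
        rw [ht, ← Real.rpow_mul hepos.le, inv_mul_cancel₀ hr.ne', Real.rpow_one]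
      have hwnn : ∀ m, 0 ≤ Function.update x i t m := fun m => by
        rcases eq_or_ne m i with rfl | hm
        · simpa using htpos.le
        · simpa [Function.update_of_ne hm] using hx.1 m
      have hwi : Function.update x i t i = t := by simp
      have hwj : Function.update x i t j = x j := by
        simp [Function.update_of_ne hji]
      have hwF : Feasible (Function.update x i t) :=
        ⟨hwnn, ⟨i, by rw [hwi]; exact htpos.ne'⟩⟩
      have hSMw : ci < c.P (Function.update x i t) i := by
        have := hSM x hx i hlt t (by rw [hxi]; exact htpos)
        exact this
      have hπ := hpair i j (Ne.symm hji) (Function.update x i t) hwnn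
        (by rw [hwi]; exact htpos) (by rw [hwj]; exact hxj)
      have hL := (c.LCA2 hLCA hwF (Ne.symm hji)
        (Or.inl (by rw [hwi]; exact htpos.ne'))).1
      have hsum2 : c.P (Function.update x i t) i + c.P (Function.update x i t) j ≤ 1 :=
        c.sum_two_le hN hwF (Ne.symm hji)
      have h1c : (0:ℝ) < 1 - ci := by linarith
      have hπval : c.p {i, j} (Function.update x i t) i = ci := by
        rw [hπ, hwi, hwj, htr]
        have hDen : (0:ℝ) < a i * eps + a j * x j ^ r := by
          have hh1 := mul_pos (hapos i) hepos
          have hh2 : (0:ℝ) < a j * x j ^ r := mul_pos (hapos j) (Real.rpow_pos_of_pos hxj r)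
          linarith
        rw [div_eq_iff hDen.ne', heps, hA]
        have hzz : a i - a i * ci ≠ 0 := by
          have := mul_pos (hapos i) h1c
          nlinarith
        have hv : (a i - a i * ci) * (a i - a i * ci)⁻¹ = 1 := mul_inv_cancel₀ hzz
        have h1c' : (1:ℝ) - ci ≠ 0 := h1c.ne'
        have hai' : a i ≠ 0 := (hapos i).ne'
        field_simp <;> ring
      have hPwj : 0 ≤ c.P (Function.update x i t) j := c.P_nonneg hN hwF j
      have hle : c.P (Function.update x i t) i ≤ ci := by
        rw [hL, hπval]
        nlinarith [hip.le]
      linarith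
    · -- P x i = 1 case
      have hPj : c.P x j = 0 := c.P_eq_zero_of_ne hN hx (Ne.symm hji) heq1
      by_cases hsupp : ∃ k, k ≠ j ∧ x k ≠ 0
      · obtain ⟨k, hkj, hk0⟩ := hsupp
        have hxk : 0 < x k := (hx.1 k).lt_of_ne (Ne.symm hk0)
        have hynn : ∀ m, 0 ≤ Function.update x j (x j / 2) m := fun m => by
          rcases eq_or_ne m j with rfl | hm
          · simpa using (half_pos hxj).le
          · simpa [Function.update_of_ne hm] using hx.1 m
        have hyj : Function.update x j (x j / 2) j = x j / 2 := by simp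
        have hyk : Function.update x j (x j / 2) k = x k := by
          simp [Function.update_of_ne hkj]
        have hyF : Feasible (Function.update x j (x j / 2)) :=
          ⟨hynn, ⟨j, by rw [hyj]; exact (half_pos hxj).ne'⟩⟩
        have h1y : c.P (Function.update x j (x j / 2)) j = 1 :=
          c.lemZ hN hSM hx hPj (by linarith) hyF
        have hPyk : c.P (Function.update x j (x j / 2)) k = 0 :=
          c.P_eq_zero_of_ne hN hyF (Ne.symm hkj) h1y
        have hL := (c.LCA2 hLCA hyF (Ne.symm hkj)
          (Or.inl (by rw [hyj]; exact (half_pos hxj).ne'))).1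
        rw [h1y, hPyk, hpair j k (Ne.symm hkj) _ hynn (by rw [hyj]; exact half_pos hxj)
          (by rw [hyk]; exact hxk), add_zero, mul_one, hyj, hyk] at hL
        have h1 : 0 < a j * (x j / 2) ^ r :=
          mul_pos (hapos j) (Real.rpow_pos_of_pos (half_pos hxj) r)
        have h2 : 0 < a k * x k ^ r :=
          mul_pos (hapos k) (Real.rpow_pos_of_pos hxk r)
        have hlt1 : a j * (x j / 2) ^ r / (a j * (x j / 2) ^ r + a k * x k ^ r) < 1 := by
          rw [div_lt_one (by linarith)]; linarith
        rw [← hL] at hlt1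
        exact absurd hlt1 (lt_irrefl 1)
      · push_neg at hsupp
        have hupd : Function.update x j (2 * x j) = fun m => 2 * x m := by
          funext m
          rcases eq_or_ne m j with rfl | hm
          · simp
          · simp [Function.update_of_ne hm, hsupp m hm]
        have h2j : c.P (fun m => 2 * x m) j = 0 := by
          rw [hHOM x hx j 2 two_pos]; exact hPj
        have hstep := hSM x hx j (by rw [hPj]; norm_num) (2 * x j) (by linarith)
        rw [hupd, h2j, hPj] at hstep
        exact lt_irrefl 0 hstep
  -- full P formula
  have hPall : ∀ x : N → ℝ, Feasible x → ∀ i,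
      c.P x i = a i * x i ^ r / ∑ j, a j * x j ^ r := by
    intro x hx i
    rw [eq_div_iff (hDpos x hx).ne']
    by_cases hxi : x i = 0
    · rw [hPzero x hx i hxi, hxi, Real.zero_rpow hr.ne', mul_zero, zero_mul]
    · have hxip : 0 < x i := (hx.1 i).lt_of_ne (Ne.symm hxi)
      have hc : ∀ j, c.P x i * (a j * x j ^ r) = c.P x j * (a i * x i ^ r) := by
        intro j
        rcases eq_or_ne i j with rfl | hij
        · ring
        · by_cases hxj : x j = 0
          · rw [hPzero x hx j hxj, hxj, Real.zero_rpow hr.ne', mul_zero, mul_zero,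
              zero_mul]
          · have hxjp : 0 < x j := (hx.1 j).lt_of_ne (Ne.symm hxj)
            obtain ⟨e1, e2⟩ := c.LCA2 hLCA hx hij (Or.inl hxi)
            rw [hpair i j hij x hx.1 hxip hxjp] at e1
            rw [Finset.pair_comm i j] at e2
            rw [hpair j i (Ne.symm hij) x hx.1 hxjp hxip] at e2
            have hAi : 0 < a i * x i ^ r :=
              mul_pos (hapos i) (Real.rpow_pos_of_pos hxip r)
            have hAj : 0 < a j * x j ^ r :=
              mul_pos (hapos j) (Real.rpow_pos_of_pos hxjp r)
            have hne1 : a i * x i ^ r + a j * x j ^ r ≠ 0 := by positivity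
            have hne2 : a j * x j ^ r + a i * x i ^ r ≠ 0 := by
              rw [add_comm]; exact hne1
            set S := c.P x i + c.P x j with hS
            rw [e1, e2]
            field_simp
            ring
      calc c.P x i * ∑ j, a j * x j ^ r = ∑ j, c.P x i * (a j * x j ^ r) := by
            rw [Finset.mul_sum]
        _ = ∑ j, c.P x j * (a i * x i ^ r) := Finset.sum_congr rfl fun j _ => hc j
        _ = (∑ j, c.P x j) * (a i * x i ^ r) := by rw [Finset.sum_mul]
        _ = a i * x i ^ r := by rw [c.sumP hN hx, one_mul]
  -- conclude
  refine ⟨r, a, hr, hapos, ?_⟩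
  intro M hM x hxM i hiM
  have hxF : Feasible x := ⟨hxM.1, hxM.2.imp fun j hj => hj.2⟩
  obtain ⟨j0, hj0M, hj0⟩ := hxM.2
  have hT : 0 < ∑ j ∈ M, a j * x j ^ r :=
    Finset.sum_pos'
      (fun m _ => mul_nonneg (hapos m).le (Real.rpow_nonneg (hxM.1 m) r))
      ⟨j0, hj0M, mul_pos (hapos j0)
        (Real.rpow_pos_of_pos ((hxM.1 j0).lt_of_ne (Ne.symm hj0)) r)⟩
  have hD := hDpos x hxF
  have hL := hLCA x hxF M hM ⟨j0, hj0M, hj0⟩ i hiM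
  have hsM : ∑ j ∈ M, c.P x j = (∑ j ∈ M, a j * x j ^ r) / ∑ j, a j * x j ^ r := by
    rw [Finset.sum_div]
    exact Finset.sum_congr rfl fun j _ => hPall x hxF j
  rw [hPall x hxF i, hsM] at hL
  rw [eq_div_iff hT.ne']
  have hL' := congrArg (fun z => z * (∑ j, a j * x j ^ r)) hL
  simp only [div_mul_cancel₀ _ hD.ne', mul_assoc] at hL'
  linarith [hL']

end CSF
end Forward

section Final
open Finset Function

variable {N : Type*} [Fintype N] [DecidableEq N]

namespace CSF

variable (c : CSF N)

lemma backward (hN : 3 ≤ Fintype.card N) {r : ℝ} {a : N → ℝ} (hr : 0 < r)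
    (ha : ∀ j, 0 < a j)
    (hf : ∀ M : Finset N, 2 ≤ M.card → ∀ x, FeasibleOn M x → ∀ i ∈ M,
      c.p M x i = a i * x i ^ r / ∑ j ∈ M, a j * x j ^ r) :
    c.SM ∧ c.LCA ∧ c.HOM := by
  have hcard2 : 2 ≤ (univ : Finset N).card := card_univ_ge hN
  have hP : ∀ x, Feasible x → ∀ i, c.P x i = a i * x i ^ r / ∑ j, a j * x j ^ r := by
    intro x hx i
    exact hf univ hcard2 x ⟨hx.1, hx.2.imp fun j hj => ⟨mem_univ j, hj⟩⟩ i (mem_univ i)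
  have hDpos : ∀ x : N → ℝ, Feasible x → 0 < ∑ j, a j * x j ^ r := by
    intro x hx
    obtain ⟨j, hj⟩ := hx.2
    exact Finset.sum_pos'
      (fun m _ => mul_nonneg (ha m).le (Real.rpow_nonneg (hx.1 m) r))
      ⟨j, mem_univ j, mul_pos (ha j)
        (Real.rpow_pos_of_pos ((hx.1 j).lt_of_ne (Ne.symm hj)) r)⟩
  refine ⟨?_, ?_, ?_⟩
  · -- SM
    intro x hx i hi t hti
    have hxt : 0 < t := lt_of_le_of_lt (hx.1 i) hti
    have hxF' : Feasible (Function.update x i t) := by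
      constructor
      · intro m
        rcases eq_or_ne m i with rfl | hm
        · simpa using hxt.le
        · simpa [Function.update_of_ne hm] using hx.1 m
      · exact ⟨i, by simpa using hxt.ne'⟩
    have hEnn : 0 ≤ ∑ j ∈ univ.erase i, a j * x j ^ r :=
      Finset.sum_nonneg fun m _ => mul_nonneg (ha m).le (Real.rpow_nonneg (hx.1 m) r)
    have hDx : ∑ j, a j * x j ^ r = a i * x i ^ r + ∑ j ∈ univ.erase i, a j * x j ^ r :=
      (Finset.add_sum_erase univ _ (mem_univ i)).symm
    have hDt : ∑ j, a j * (Function.update x i t j) ^ r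
        = a i * t ^ r + ∑ j ∈ univ.erase i, a j * x j ^ r := by
      rw [← Finset.add_sum_erase univ _ (mem_univ i)]
      congr 1
      · rw [Function.update_self]
      · exact Finset.sum_congr rfl fun m hm => by
          rw [Function.update_of_ne (Finset.mem_erase.mp hm).1]
    have hPx := hP x hx i
    have hPt := hP _ hxF' i
    rw [Function.update_self] at hPt
    rw [hPx, hPt, hDx, hDt]
    have hix : 0 ≤ a i * x i ^ r := mul_nonneg (ha i).le (Real.rpow_nonneg (hx.1 i) r)
    have hiv : 0 < a i * t ^ r := mul_pos (ha i) (Real.rpow_pos_of_pos hxt r)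
    have hEpos : 0 < ∑ j ∈ univ.erase i, a j * x j ^ r := by
      rcases hEnn.lt_or_eq with hE | hE
      · exact hE
      · exfalso
        have hD := hDpos x hx
        rw [hDx, ← hE, add_zero] at hD
        have hone : c.P x i = 1 := by
          rw [hPx, hDx, ← hE, add_zero, div_self hD.ne']
        linarith
    have hlt2 : a i * x i ^ r < a i * t ^ r :=
      mul_lt_mul_of_pos_left (Real.rpow_lt_rpow (hx.1 i) hti hr) (ha i)
    rw [div_lt_div_iff₀ (by linarith) (by linarith)]
    nlinarith
  · -- LCA
    intro x hx M hM hex i hiM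
    have hxM : FeasibleOn M x := ⟨hx.1, hex⟩
    obtain ⟨j0, hj0M, hj0⟩ := hex
    have hT : 0 < ∑ j ∈ M, a j * x j ^ r :=
      Finset.sum_pos'
        (fun m _ => mul_nonneg (ha m).le (Real.rpow_nonneg (hx.1 m) r))
        ⟨j0, hj0M, mul_pos (ha j0)
          (Real.rpow_pos_of_pos ((hx.1 j0).lt_of_ne (Ne.symm hj0)) r)⟩
    have hD := hDpos x hx
    rw [hP x hx i, hf M hM x hxM i hiM]
    have hsM : ∑ j ∈ M, c.P x j = (∑ j ∈ M, a j * x j ^ r) / ∑ j, a j * x j ^ r := by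
      rw [Finset.sum_div]
      exact Finset.sum_congr rfl fun j _ => hP x hx j
    rw [hsM, div_mul_div_comm,
      mul_comm (a i * x i ^ r) (∑ j ∈ M, a j * x j ^ r),
      mul_div_mul_left _ _ hT.ne']
  · -- HOM
    intro x hx i l hl
    have hxl : Feasible (fun k => l * x k) :=
      ⟨fun k => mul_nonneg hl.le (hx.1 k), hx.2.imp fun j hj => mul_ne_zero hl.ne' hj⟩
    rw [hP x hx i, hP _ hxl i]
    have hm : ∀ k : N, a k * (l * x k) ^ r = l ^ r * (a k * x k ^ r) := fun k => by
      rw [Real.mul_rpow hl.le (hx.1 k)]; ring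
    simp only [hm]
    rw [← Finset.mul_sum, mul_div_mul_left _ _ (Real.rpow_pos_of_pos hl r).ne']

end CSF
end Final


/-- SM, LCA and HOM hold iff the CSF is the asymmetric Tullock CSF
`p_i^M(x) = a_i x_i^r / ∑_{j∈M} a_j x_j^r`. -/
theorem statement8 {N : Type*} [Fintype N] [DecidableEq N]
    (hN : 3 ≤ Fintype.card N) (c : CSF N) :
    (c.SM ∧ c.LCA ∧ c.HOM) ↔
      ∃ (r : ℝ) (a : N → ℝ), 0 < r ∧ (∀ j, 0 < a j) ∧
        ∀ M : Finset N, 2 ≤ M.card → ∀ x, FeasibleOn M x → ∀ i ∈ M,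
          c.p M x i = a i * x i ^ r / ∑ j ∈ M, a j * x j ^ r := by
  constructor
  · rintro ⟨hSM, hLCA, hHOM⟩
    exact c.forward hN hSM hLCA hHOM
  · rintro ⟨r, a, hr, ha, hf⟩
    exact c.backward hN hr ha hf
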